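/- arXiv:0909.2878 — 3 statements merged into one kernel-verified Lean document; each statement's English description precedes it below -/
import Mathlib

section
/- Let Re β ≥ 0, h ∈ ℂ, and let z ∈ ℂ be such that z⁻¹ lies neither in the spectrum of e^{−βh}L↑_β nor in the spectrum of e^{βh}L↓_β (as bounded operators on H^∞(Π)). Then the following operator identity holds on H^∞(Π): [1 + M↓_{β,ze^{βh}}][1 − zL_{β,h}][1 + M↑_{β,ze^{−βh}}] = 1 − M↓_{β,ze^{βh}}M↑_{β,ze^{−βh}}. -/
open Complex BoundedContinuousFunction
open scoped ENNReal

/-- The open right half-plane `Π = {z : ℂ | 0 < Re z}`. -/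
def RHP : Set ℂ := {z : ℂ | 0 < z.re}

/-- Extension of a bounded continuous function on `Π` to `ℂ` (by zero off `Π`). -/
noncomputable def extFun (f : ↥RHP →ᵇ ℂ) : ℂ → ℂ :=
  fun z => if h : 0 < z.re then f ⟨z, h⟩ else 0

/-- `H^∞(Π)`: the space of bounded holomorphic functions on `Π`, realised as the
submodule of the Banach space of bounded continuous functions on `Π` (with the
supremum norm) consisting of the holomorphic ones. -/
noncomputable def Hinf : Submodule ℂ (↥RHP →ᵇ ℂ) where
  carrier := {f | DifferentiableOn ℂ (extFun f) RHP}
  add_mem' := by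
    intro f g hf hg
    refine (DifferentiableOn.add hf hg).congr (fun z hz => ?_)
    have hz' : 0 < z.re := hz
    simp [extFun, hz']
  zero_mem' := by
    refine (differentiableOn_const 0).congr (fun z hz => ?_)
    have hz' : 0 < z.re := hz
    simp only [extFun]
    rw [dif_pos hz']
    rfl
  smul_mem' := by
    intro c f hf
    refine (hf.const_smul c).congr (fun z hz => ?_)
    have hz' : 0 < z.re := hz
    simp [extFun, hz']

lemma mem_shift (z : ↥RHP) : (1 : ℂ) + z.1 ∈ RHP := by
  have hz := z.2
  simp only [RHP, Set.mem_setOf_eq, Complex.add_re, Complex.one_re] at *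
  linarith

lemma mem_div (z : ↥RHP) : z.1 / (1 + z.1) ∈ RHP := by
  have hz := z.2
  simp only [RHP, Set.mem_setOf_eq] at hz ⊢
  have hw : (1 + z.1) ≠ 0 := by
    intro h
    have h2 : (1 + z.1).re = 0 := by rw [h]; simp
    simp only [Complex.add_re, Complex.one_re] at h2
    linarith
  have hns : 0 < Complex.normSq (1 + z.1) := Complex.normSq_pos.mpr hw
  rw [Complex.div_re]
  have h1 : 0 < z.1.re * (1 + z.1).re := by
    simp only [Complex.add_re, Complex.one_re]
    nlinarith
  have h2 : 0 ≤ z.1.im * (1 + z.1).im := by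
    simp only [Complex.add_im, Complex.one_im, zero_add]
    nlinarith [sq_nonneg z.1.im]
  have := div_pos h1 hns
  have := div_nonneg h2 hns.le
  linarith

/-- Pointwise characterisation of the transfer operator
`(L↑_β f)(z) = (1+z)^(-2β) f(z/(1+z))` on `H^∞(Π)` (principal branch power). -/
def IsLup (β : ℂ) (T : ↥Hinf →L[ℂ] ↥Hinf) : Prop :=
  ∀ f : ↥Hinf, ∀ z : ↥RHP,
    (T f).1 z = (1 + z.1) ^ (-(2 * β)) * f.1 ⟨z.1 / (1 + z.1), mem_div z⟩

/-- Pointwise characterisation of the transfer operator `(L↓ f)(z) = f(1+z)` on `H^∞(Π)`. -/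
def IsLdn (T : ↥Hinf →L[ℂ] ↥Hinf) : Prop :=
  ∀ f : ↥Hinf, ∀ z : ↥RHP, (T f).1 z = f.1 ⟨1 + z.1, mem_shift z⟩

/-- The cluster operator `M_{T,τ} = τ T (1 - τ T)⁻¹`, via `Ring.inverse` (which agrees
with the genuine inverse whenever `1 - τ T` is invertible). -/
noncomputable def Mop (T : ↥Hinf →L[ℂ] ↥Hinf) (τ : ℂ) : ↥Hinf →L[ℂ] ↥Hinf :=
  (τ • T) * Ring.inverse (1 - τ • T)

/-! With `A = z e^{-βh} L↑` and `B = z e^{βh} L↓` the spectral hypotheses make `1 - A` and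
`1 - B` invertible, and `1 + A (1 - A)⁻¹ = (1 - A)⁻¹`, likewise for `B`. Factoring
`1 - (A + B) = (1 - B)(1 - A) - BA` and using that `B` commutes with `(1 - B)⁻¹`, the left-hand
side becomes `1 - (1 - B)⁻¹ B A (1 - A)⁻¹ = 1 - M↓ M↑`. -/

open scoped Ring

namespace spectrum

theorem isUnit_one_sub_smul_of_inv_notMem {𝕜 A : Type*} [Field 𝕜] [Ring A] [Algebra 𝕜 A]
    {z : 𝕜} {a : A} (h : z⁻¹ ∉ spectrum 𝕜 a) : IsUnit (1 - z • a) := by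
  rcases eq_or_ne z 0 with rfl | hz
  · simp
  · have hu : IsUnit ((Units.mk0 z hz)⁻¹ • (1 : A) - a) := by
      rw [Units.smul_def, ← Algebra.algebraMap_eq_smul_one]
      exact notMem_iff.mp h
    rwa [IsUnit.smul_sub_iff_sub_inv_smul, inv_inv] at hu

end spectrum

namespace Ring

variable {R : Type*} [Ring R] {a b : R}

theorem one_add_mul_inverse_one_sub (ha : IsUnit (1 - a)) : 1 + a * (1 - a)⁻¹ʳ = (1 - a)⁻¹ʳ := by
  calc 1 + a * (1 - a)⁻¹ʳ = (1 - a) * (1 - a)⁻¹ʳ + a * (1 - a)⁻¹ʳ := by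
        rw [mul_inverse_cancel _ ha]
    _ = (1 - a)⁻¹ʳ := by rw [← add_mul, sub_add_cancel, one_mul]

theorem commute_inverse_one_sub (a : R) : Commute a (1 - a)⁻¹ʳ := by
  have hself : Commute (1 - a) (1 - a)⁻¹ʳ := by
    by_cases ha : IsUnit (1 - a)
    · rw [Commute, SemiconjBy, mul_inverse_cancel _ ha, inverse_mul_cancel _ ha]
    · rw [inverse_non_unit _ ha]
      exact Commute.zero_right _
  simpa using (Commute.one_left (1 - a)⁻¹ʳ).sub_left hself

theorem one_add_mul_inverse_mul_one_sub_add_mul_one_add_mul_inverse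
    (ha : IsUnit (1 - a)) (hb : IsUnit (1 - b)) :
    (1 + b * (1 - b)⁻¹ʳ) * (1 - (a + b)) * (1 + a * (1 - a)⁻¹ʳ)
      = 1 - b * (1 - b)⁻¹ʳ * (a * (1 - a)⁻¹ʳ) := by
  rw [one_add_mul_inverse_one_sub ha, one_add_mul_inverse_one_sub hb,
    (commute_inverse_one_sub b).eq]
  calc (1 - b)⁻¹ʳ * (1 - (a + b)) * (1 - a)⁻¹ʳ
      = (1 - b)⁻¹ʳ * (1 - b) * ((1 - a) * (1 - a)⁻¹ʳ) - (1 - b)⁻¹ʳ * b * (a * (1 - a)⁻¹ʳ) := by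
        noncomm_ring
    _ = 1 - (1 - b)⁻¹ʳ * b * (a * (1 - a)⁻¹ʳ) := by
        rw [inverse_mul_cancel _ hb, mul_inverse_cancel _ ha, one_mul]

end Ring

theorem cluster_operator_identity_general (β h z : ℂ)
    (Lup Ldn : ↥Hinf →L[ℂ] ↥Hinf)
    (hz1 : z⁻¹ ∉ spectrum ℂ (Complex.exp (-(β * h)) • Lup))
    (hz2 : z⁻¹ ∉ spectrum ℂ (Complex.exp (β * h) • Ldn)) :
    (1 + Mop Ldn (z * Complex.exp (β * h)))
        * (1 - z • (Complex.exp (-(β * h)) • Lup + Complex.exp (β * h) • Ldn))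
        * (1 + Mop Lup (z * Complex.exp (-(β * h))))
      = 1 - Mop Ldn (z * Complex.exp (β * h)) * Mop Lup (z * Complex.exp (-(β * h))) := by
  have hunit_up := spectrum.isUnit_one_sub_smul_of_inv_notMem hz1
  have hunit_dn := spectrum.isUnit_one_sub_smul_of_inv_notMem hz2
  rw [smul_smul] at hunit_up hunit_dn
  -- without the explicit vector `rw` does not match the scalar action on `→L[ℂ]`
  rw [smul_add z (Complex.exp (-(β * h)) • Lup), smul_smul z, smul_smul z]
  exact Ring.one_add_mul_inverse_mul_one_sub_add_mul_one_add_mul_inverse hunit_up hunit_dn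

/-- (Lemma 1, Eq. (20)): with `M↓ = M↓_{β,ze^{βh}}`, `M↑ = M↑_{β,ze^{-βh}}`
and `L_{β,h} = e^{-βh}L↑_β + e^{βh}L↓_β`, one has
`[1 + M↓][1 - zL_{β,h}][1 + M↑] = 1 - M↓M↑`. -/
theorem cluster_operator_identity (β h z : ℂ) (hβ : 0 ≤ β.re)
    (Lup Ldn : ↥Hinf →L[ℂ] ↥Hinf) (hup : IsLup β Lup) (hdn : IsLdn Ldn)
    (hz1 : z⁻¹ ∉ spectrum ℂ (Complex.exp (-(β * h)) • Lup))
    (hz2 : z⁻¹ ∉ spectrum ℂ (Complex.exp (β * h) • Ldn)) :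
    (1 + Mop Ldn (z * Complex.exp (β * h)))
        * (1 - z • (Complex.exp (-(β * h)) • Lup + Complex.exp (β * h) • Ldn))
        * (1 + Mop Lup (z * Complex.exp (-(β * h))))
      = 1 - Mop Ldn (z * Complex.exp (β * h)) * Mop Lup (z * Complex.exp (-(β * h))) :=
  cluster_operator_identity_general β h z Lup Ldn hz1 hz2
end

section
/- For 0 < τ < 1, the following identity holds: (1/log 2)·∫₀¹ Σ_{n≥1} (τⁿ − 1)/((n+x)(n+1+x)) dx = −((1−τ)²/(τ² log 2))·Σ_{n≥1} τⁿ log n. In the notation of the paper this reads μ((M_τ − M_1)g) = −((1−τ)²/(τ² log 2))·Σ_{n≥1} τⁿ log n, where μ is integration against Lebesgue measure on [0,1], g(x) = 1/(log 2 · (1+x)), and (M_τ f)(x) = Σ_{n≥1} τⁿ (n+x)^{−2} f(1/(n+x)). -/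
/-! Summation by parts against `1/(n+1+x) - 1/(n+2+x)` turns the integrand into
`(τ - 1) Σ τⁿ/(n+1+x)`, whose termwise integral is `(τ - 1) Σ τⁿ (log (n+2) - log (n+1))`.
A second summation by parts, now with the logarithms, gives `τ² Σ τⁿ (log (n+2) - log (n+1))
= (1 - τ) Σ τⁿ⁺¹ log (n+1)`, because `log 1 = 0` kills the boundary term. -/

open Real Filter Topology Set MeasureTheory

lemma Antitone.hasSum_sub_succ {u : ℕ → ℝ} (hu : Antitone u) (hlim : Tendsto u atTop (𝓝 0)) :
    HasSum (fun n => u n - u (n + 1)) (u 0) := by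
  rw [hasSum_iff_tendsto_nat_of_nonneg fun n => sub_nonneg.mpr (hu n.le_succ)]
  simp_rw [Finset.sum_range_sub']
  simpa using tendsto_const_nhds.sub hlim

lemma HasSum.pow_succ_mul_sub_succ {R : Type*} [CommRing R] [TopologicalSpace R]
    [IsTopologicalRing R] {τ A : R} {f : ℕ → R} (h : HasSum (fun n => τ ^ n * f n) A) :
    HasSum (fun n => τ ^ (n + 1) * (f n - f (n + 1))) (f 0 - (1 - τ) * A) := by
  have hshift : HasSum (fun n => τ ^ (n + 1) * f (n + 1)) (A - f 0) := by
    simpa using (hasSum_nat_add_iff' 1).mpr h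
  have := (h.mul_left τ).sub hshift
  rw [show τ * A - (A - f 0) = f 0 - (1 - τ) * A by ring] at this
  exact this.congr_fun fun n => by ring

lemma Antitone.summable_pow_mul {τ : ℝ} (hτ : |τ| < 1) {u : ℕ → ℝ} (hu : Antitone u)
    (hlim : Tendsto u atTop (𝓝 0)) : Summable fun n => τ ^ n * u n := by
  refine .of_norm_bounded ((summable_geometric_of_lt_one (abs_nonneg τ) hτ).mul_left (u 0))
    fun n => ?_
  rw [norm_mul, norm_pow, Real.norm_eq_abs, Real.norm_eq_abs,
    abs_of_nonneg (hu.le_of_tendsto hlim n), mul_comm]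
  exact mul_le_mul_of_nonneg_right (hu n.zero_le) (by positivity)

lemma Antitone.hasSum_pow_succ_sub_one_mul_sub_succ {τ : ℝ} (hτ : |τ| < 1) {u : ℕ → ℝ}
    (hu : Antitone u) (hlim : Tendsto u atTop (𝓝 0)) :
    HasSum (fun n => (τ ^ (n + 1) - 1) * (u n - u (n + 1))) ((τ - 1) * ∑' n, τ ^ n * u n) := by
  have := (hu.summable_pow_mul hτ hlim).hasSum.pow_succ_mul_sub_succ.sub (hu.hasSum_sub_succ hlim)
  rw [show u 0 - (1 - τ) * ∑' n, τ ^ n * u n - u 0 = (τ - 1) * ∑' n, τ ^ n * u n by ring]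
    at this
  exact this.congr_fun fun n => by ring

lemma hasSum_pow_succ_sub_one_div {τ : ℝ} (hτ : |τ| < 1) {x : ℝ} (hx : -1 < x) :
    HasSum (fun n : ℕ => (τ ^ (n + 1) - 1) / (((n : ℝ) + 1 + x) * ((n : ℝ) + 2 + x)))
      ((τ - 1) * ∑' n : ℕ, τ ^ n * ((n : ℝ) + 1 + x)⁻¹) := by
  have hpos (n : ℕ) : 0 < (n : ℝ) + 1 + x := by linarith [n.cast_nonneg (α := ℝ)]
  have hu : Antitone fun n : ℕ => ((n : ℝ) + 1 + x)⁻¹ :=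
    antitone_nat_of_succ_le fun n => inv_anti₀ (hpos n) (by push_cast; linarith)
  have hlim : Tendsto (fun n : ℕ => ((n : ℝ) + 1 + x)⁻¹) atTop (𝓝 0) :=
    (tendsto_atTop_add_const_right _ (1 + x) tendsto_natCast_atTop_atTop).inv_tendsto_atTop.congr
      fun n => by simp only [Pi.inv_apply, add_assoc]
  refine (hu.hasSum_pow_succ_sub_one_mul_sub_succ hτ hlim).congr_fun fun n => ?_
  have h₁ := hpos n
  have h₂ : 0 < (n : ℝ) + 2 + x := by linarith
  rw [Nat.cast_succ, add_assoc (n : ℝ) 1 1, one_add_one_eq_two]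
  field_simp
  ring

lemma intervalIntegral.integral_inv_const_add {a b c : ℝ} (ha : 0 < c + a) (hb : 0 < c + b) :
    ∫ x in a..b, (c + x)⁻¹ = log (c + b) - log (c + a) := by
  rw [intervalIntegral.integral_comp_add_left (fun x => x⁻¹) c, integral_inv_of_pos ha hb,
    log_div hb.ne' ha.ne']

theorem intervalIntegral.hasSum_integral_of_norm_le {E : Type*} [NormedAddCommGroup E]
    [NormedSpace ℝ E] [CompleteSpace E] {F : ℕ → ℝ → E} {bound : ℕ → ℝ} {a b : ℝ}
    (hF : ∀ n, IntervalIntegrable (F n) volume a b)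
    (h_bound : ∀ n, ∀ x ∈ uIoc a b, ‖F n x‖ ≤ bound n)
    (h_sum : Summable bound) :
    HasSum (fun n => ∫ x in a..b, F n x) (∫ x in a..b, ∑' n, F n x) :=
  hasSum_integral_of_dominated_convergence (fun n _ => bound n)
    (fun n => (hF n).def'.aestronglyMeasurable) (fun n => ae_of_all _ (h_bound n))
    (ae_of_all _ fun _ _ => h_sum) intervalIntegrable_const
    (ae_of_all _ fun x hx => (h_sum.of_norm_bounded (h_bound · x hx)).hasSum)

lemma integral_tsum_pow_mul_inv {τ : ℝ} (hτ : |τ| < 1) :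
    ∫ x in (0 : ℝ)..1, ∑' n : ℕ, τ ^ n * ((n : ℝ) + 1 + x)⁻¹
      = ∑' n : ℕ, τ ^ n * (log ((n : ℝ) + 2) - log ((n : ℝ) + 1)) := by
  have hpos (n : ℕ) {x : ℝ} (hx : 0 ≤ x) : 0 < (n : ℝ) + 1 + x := by positivity
  have hint (n : ℕ) :
      IntervalIntegrable (fun x => τ ^ n * ((n : ℝ) + 1 + x)⁻¹) volume 0 1 := by
    refine ContinuousOn.intervalIntegrable <| continuousOn_const.mul <|
      (continuousOn_const.add continuousOn_id).inv₀ fun x hx => (hpos n ?_).ne'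
    rw [uIcc_of_le zero_le_one] at hx
    exact hx.1
  have hbound (n : ℕ) (x : ℝ) (hx : x ∈ uIoc 0 1) : ‖τ ^ n * ((n : ℝ) + 1 + x)⁻¹‖ ≤ |τ| ^ n := by
    rw [uIoc_of_le zero_le_one] at hx
    rw [norm_mul, norm_pow, Real.norm_eq_abs, norm_inv, Real.norm_eq_abs,
      abs_of_pos (hpos n hx.1.le)]
    refine mul_le_of_le_one_right (by positivity) (inv_le_one_of_one_le₀ ?_)
    linarith [hx.1, n.cast_nonneg (α := ℝ)]
  refine (intervalIntegral.hasSum_integral_of_norm_le hint hbound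
    (summable_geometric_of_lt_one (abs_nonneg τ) hτ)).tsum_eq.symm.trans (tsum_congr fun n => ?_)
  rw [intervalIntegral.integral_const_mul, intervalIntegral.integral_inv_const_add
    (by simpa using hpos n le_rfl) (by linarith [hpos n zero_le_one])]
  ring_nf

lemma summable_pow_mul_log_add_one {τ : ℝ} (hτ : |τ| < 1) :
    Summable fun n : ℕ => τ ^ n * log ((n : ℝ) + 1) := by
  refine .of_norm_bounded
    (summable_pow_mul_geometric_of_norm_lt_one 1 (r := |τ|) (by simpa using hτ)) fun n => ?_
  have hlog : log ((n : ℝ) + 1) ≤ n := by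
    linarith [log_le_sub_one_of_pos (x := (n : ℝ) + 1) (by positivity)]
  rw [norm_mul, norm_pow, Real.norm_eq_abs, Real.norm_eq_abs, abs_of_nonneg (log_nonneg (by simp)),
    pow_one, mul_comm]
  exact mul_le_mul_of_nonneg_right hlog (by positivity)

lemma sq_mul_tsum_pow_mul_log_succ_sub {τ : ℝ} (hτ : |τ| < 1) :
    τ ^ 2 * ∑' n : ℕ, τ ^ n * (log ((n : ℝ) + 2) - log ((n : ℝ) + 1))
      = (1 - τ) * ∑' n : ℕ, τ ^ (n + 1) * log ((n : ℝ) + 1) := by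
  have h := (summable_pow_mul_log_add_one hτ).hasSum.pow_succ_mul_sub_succ
  simp only [Nat.cast_zero, zero_add, log_one, zero_sub, Nat.cast_succ, add_assoc,
    one_add_one_eq_two] at h
  have hT : ∑' n : ℕ, τ ^ (n + 1) * (log ((n : ℝ) + 1) - log ((n : ℝ) + 2))
      = -τ * ∑' n : ℕ, τ ^ n * (log ((n : ℝ) + 2) - log ((n : ℝ) + 1)) := by
    rw [← tsum_mul_left]
    exact tsum_congr fun n => by ring
  have hS : ∑' n : ℕ, τ ^ (n + 1) * log ((n : ℝ) + 1)
      = τ * ∑' n : ℕ, τ ^ n * log ((n : ℝ) + 1) := by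
    rw [← tsum_mul_left]
    exact tsum_congr fun n => by ring
  rw [hS]
  linear_combination -τ * (hT.symm.trans h.tsum_eq)

/-- For `0 < τ < 1`:
`(1/log 2) ∫₀¹ Σ_{n≥1} (τⁿ - 1)/((n+x)(n+1+x)) dx
  = -((1-τ)²/(τ² log 2)) Σ_{n≥1} τⁿ log n`,
i.e. `μ((M_τ - M₁)g) = -((1-τ)²/(τ² log 2)) Σ_{n≥1} τⁿ log n`. -/
theorem cluster_generating_integral (τ : ℝ) (h0 : 0 < τ) (h1 : τ < 1) :
    (1 / Real.log 2) *
        ∫ x in (0 : ℝ)..1,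
          ∑' n : ℕ, (τ ^ (n + 1) - 1) / (((n : ℝ) + 1 + x) * ((n : ℝ) + 2 + x))
      = -((1 - τ) ^ 2 / (τ ^ 2 * Real.log 2)) *
          ∑' n : ℕ, τ ^ (n + 1) * Real.log ((n : ℝ) + 1) := by
  have hτ : |τ| < 1 := abs_lt.mpr ⟨by linarith, h1⟩
  have hsum : ∀ x ∈ uIcc (0 : ℝ) 1,
      ∑' n : ℕ, (τ ^ (n + 1) - 1) / (((n : ℝ) + 1 + x) * ((n : ℝ) + 2 + x))
        = (τ - 1) * ∑' n : ℕ, τ ^ n * ((n : ℝ) + 1 + x)⁻¹ := fun x hx => by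
    rw [uIcc_of_le zero_le_one] at hx
    exact (hasSum_pow_succ_sub_one_div hτ (by linarith [hx.1])).tsum_eq
  rw [intervalIntegral.integral_congr hsum, intervalIntegral.integral_const_mul,
    integral_tsum_pow_mul_inv hτ]
  have hlog2 : log 2 ≠ 0 := (log_pos one_lt_two).ne'
  have hlog := sq_mul_tsum_pow_mul_log_succ_sub hτ
  field_simp
  linear_combination (τ - 1) * hlog
end

section
/- There exists a constant C > 0 such that for all complex τ with |τ| < 1, |Σ_{n≥1} τⁿ log n − [ (1/(1−τ))·log(1/(1−τ)) − γ/(1−τ) − (1/2)·log(1/(1−τ)) ]| ≤ C, where γ is the Euler–Mascheroni constant and log denotes the principal branch. In other words, Σ_{n≥1} τⁿ log n = (1/(1−τ))log(1/(1−τ)) − γ/(1−τ) − (1/2)log(1/(1−τ)) + O(1) uniformly for |τ| < 1. -/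
/-!
Since `∑ τⁿ Hₙ = -log (1 - τ) / (1 - τ)` (Cauchy product of the geometric and logarithmic
series), it suffices to write `log n = Hₙ - γ - 1/(2n) + εₙ` and control `εₙ`. The bounds
`t + t²/2 ≤ -log (1 - t) ≤ t + t²/(2(1 - t))` at `t = 1/(n+1)` make `εₙ` decreasing and
`εₙ - (1/(2n) - 1/(2(n+1)))` increasing; both tend to `0`, so `0 ≤ εₙ ≤ 1/(2n) - 1/(2(n+1))`
and `|∑ τⁿ εₙ| ≤ 1/2`. The three main terms produce the claimed expansion up to the constant `γ`.
-/

open Filter Real Topology Finset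

namespace Real

theorem add_sq_div_two_le_neg_log_one_sub {t : ℝ} (h0 : 0 ≤ t) (h1 : t < 1) :
    t + t ^ 2 / 2 ≤ -log (1 - t) := by
  have hs := hasSum_pow_div_log_of_abs_lt_one (abs_lt.2 ⟨by linarith, h1⟩)
  have := sum_le_hasSum (range 2) (fun i _ => by positivity) hs
  norm_num [sum_range_succ] at this
  exact this

theorem neg_log_one_sub_le_add_sq_div {t : ℝ} (h0 : 0 ≤ t) (h1 : t < 1) :
    -log (1 - t) ≤ t + t ^ 2 / (2 * (1 - t)) := by
  have htail := (hasSum_nat_add_iff' 1).2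
    (hasSum_pow_div_log_of_abs_lt_one (abs_lt.2 ⟨by linarith, h1⟩))
  have hgeom := (hasSum_geometric_of_lt_one h0 h1).mul_left (t ^ 2 / 2)
  have := hasSum_le (fun n => ?_) htail hgeom
  · norm_num at this
    linarith [show t ^ 2 / 2 * (1 - t)⁻¹ = t ^ 2 / (2 * (1 - t)) by field_simp]
  · calc t ^ (n + 1 + 1) / ((n + 1 : ℕ) + 1) ≤ t ^ (n + 1 + 1) / 2 := by
          gcongr; push_cast; linarith [(n.cast_nonneg : (0 : ℝ) ≤ n)]
      _ = t ^ 2 / 2 * t ^ n := by ring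

end Real

namespace Complex

theorem hasSum_pow_succ_mul_harmonic_succ {τ : ℂ} (hτ : ‖τ‖ < 1) :
    HasSum (fun n : ℕ => τ ^ (n + 1) * (harmonic (n + 1) : ℂ)) (-log (1 - τ) / (1 - τ)) := by
  have hgeom : Summable fun n : ℕ => ‖τ ^ n‖ := by
    simpa [norm_pow] using summable_geometric_of_lt_one (norm_nonneg τ) hτ
  have hlog : Summable fun n : ℕ => ‖τ ^ (n + 1) / (n + 1)‖ := by
    refine hgeom.of_nonneg_of_le (fun _ => norm_nonneg _) fun n => ?_
    rw [norm_div, norm_pow, norm_pow, pow_succ, ← Nat.cast_add_one, norm_natCast]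
    calc ‖τ‖ ^ n * ‖τ‖ / ((n + 1 : ℕ) : ℝ) ≤ ‖τ‖ ^ n * 1 / 1 := by
          gcongr
          exact_mod_cast n.succ_pos
      _ = ‖τ‖ ^ n := by ring
  have hprod := hasSum_sum_range_mul_of_summable_norm hgeom hlog
  rw [tsum_geometric_of_norm_lt_one hτ, (hasSum_taylorSeries_neg_log' hτ).tsum_eq,
    inv_mul_eq_div] at hprod
  refine hprod.congr_fun fun n => ?_
  unfold harmonic
  rw [← sum_range_reflect, Rat.cast_sum, mul_sum]
  refine sum_congr rfl fun k hk => ?_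
  have hkn : k ≤ n := Nat.lt_succ_iff.1 (mem_range.1 hk)
  rw [div_eq_mul_inv, ← mul_assoc, ← pow_add, Nat.add_sub_cancel,
    show k + (n - k + 1) = n + 1 by omega]
  push_cast [Nat.cast_sub hkn]
  ring

theorem log_one_div_one_sub {τ : ℂ} (hτ : ‖τ‖ < 1) : log (1 / (1 - τ)) = -log (1 - τ) := by
  refine one_div (1 - τ) ▸ log_inv _ (slitPlane_arg_ne_pi ?_)
  simpa [sub_eq_add_neg] using mem_slitPlane_of_norm_lt_one (z := -τ) (by simpa)

end Complex

theorem tendsto_one_div_two_mul_add (a : ℝ) :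
    Tendsto (fun k : ℕ => 1 / (2 * ((k : ℝ) + a))) atTop (𝓝 0) :=
  tendsto_const_nhds.div_atTop <|
    (tendsto_natCast_atTop_atTop.atTop_add tendsto_const_nhds).const_mul_atTop two_pos

theorem one_sub_one_div_add_two (k : ℕ) :
    1 - 1 / ((k : ℝ) + 2) = ((k : ℝ) + 1) / ((k : ℝ) + 2) := by
  field_simp
  ring

/-- `εₙ` in `Hₙ = log n + γ + 1/(2n) - εₙ`, at `n = k + 1`. -/
noncomputable def harmonicRemainder (k : ℕ) : ℝ :=
  log ((k : ℝ) + 1) - harmonic (k + 1) + eulerMascheroniConstant + 1 / (2 * ((k : ℝ) + 1))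

theorem harmonicRemainder_succ (k : ℕ) :
    harmonicRemainder (k + 1) = harmonicRemainder k
      + (-log (1 - 1 / ((k : ℝ) + 2)) - 1 / ((k : ℝ) + 2))
      - (1 / (2 * ((k : ℝ) + 1)) - 1 / (2 * ((k : ℝ) + 2))) := by
  rw [one_sub_one_div_add_two, log_div (by positivity) (by positivity), harmonicRemainder,
    harmonicRemainder, harmonic_succ (k + 1)]
  push_cast
  rw [show (k : ℝ) + 1 + 1 = k + 2 by ring]
  ring

theorem antitone_harmonicRemainder : Antitone harmonicRemainder := by
  refine antitone_nat_of_succ_le fun k => ?_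
  have hlog := neg_log_one_sub_le_add_sq_div (t := 1 / ((k : ℝ) + 2)) (by positivity)
    ((div_lt_one (by positivity)).2 (by linarith))
  have hgap : (1 / ((k : ℝ) + 2)) ^ 2 / (2 * (1 - 1 / ((k : ℝ) + 2)))
      = 1 / (2 * ((k : ℝ) + 1)) - 1 / (2 * ((k : ℝ) + 2)) := by
    rw [one_sub_one_div_add_two]
    field_simp
    ring
  rw [harmonicRemainder_succ]
  linarith

theorem monotone_harmonicRemainder_sub :
    Monotone fun k : ℕ =>
      harmonicRemainder k - (1 / (2 * ((k : ℝ) + 1)) - 1 / (2 * ((k : ℝ) + 2))) := by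
  refine monotone_nat_of_le_succ fun k => ?_
  have hlog := add_sq_div_two_le_neg_log_one_sub (t := 1 / ((k : ℝ) + 2)) (by positivity)
    ((div_lt_one (by positivity)).2 (by linarith))
  have hgap :
      1 / (2 * ((k : ℝ) + 2)) - 1 / (2 * ((k : ℝ) + 3)) ≤ (1 / ((k : ℝ) + 2)) ^ 2 / 2 := by
    field_simp
    nlinarith
  rw [harmonicRemainder_succ]
  push_cast
  rw [show (k : ℝ) + 1 + 1 = k + 2 by ring, show (k : ℝ) + 1 + 2 = k + 3 by ring]
  linarith

theorem tendsto_harmonicRemainder : Tendsto harmonicRemainder atTop (𝓝 0) := by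
  have hH := tendsto_harmonic_sub_log.comp (tendsto_add_atTop_nat 1)
  have := (hH.neg.add_const eulerMascheroniConstant).add (tendsto_one_div_two_mul_add 1)
  rw [neg_add_cancel, add_zero] at this
  refine this.congr fun k => ?_
  simp only [harmonicRemainder, Function.comp_apply]
  push_cast
  ring

theorem harmonicRemainder_nonneg (k : ℕ) : 0 ≤ harmonicRemainder k :=
  antitone_harmonicRemainder.le_of_tendsto tendsto_harmonicRemainder k

theorem harmonicRemainder_le (k : ℕ) :
    harmonicRemainder k ≤ 1 / (2 * ((k : ℝ) + 1)) - 1 / (2 * ((k : ℝ) + 2)) := by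
  have := monotone_harmonicRemainder_sub.ge_of_tendsto (by
    simpa using tendsto_harmonicRemainder.sub
      ((tendsto_one_div_two_mul_add 1).sub (tendsto_one_div_two_mul_add 2))) k
  linarith

theorem sum_range_harmonicRemainder_le (n : ℕ) : ∑ k ∈ range n, harmonicRemainder k ≤ 1 / 2 :=
  calc ∑ k ∈ range n, harmonicRemainder k
      ≤ ∑ k ∈ range n, (1 / (2 * ((k : ℝ) + 1)) - 1 / (2 * (((k + 1 : ℕ) : ℝ) + 1))) :=
        sum_le_sum fun k _ => by
          push_cast
          rw [show (k : ℝ) + 1 + 1 = k + 2 by ring]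
          exact harmonicRemainder_le k
    _ = 1 / 2 - 1 / (2 * ((n : ℝ) + 1)) := by
        rw [sum_range_sub' (fun k : ℕ => 1 / (2 * ((k : ℝ) + 1)))]
        simp
    _ ≤ 1 / 2 := sub_le_self _ (by positivity)

theorem summable_harmonicRemainder : Summable harmonicRemainder :=
  summable_of_sum_range_le harmonicRemainder_nonneg sum_range_harmonicRemainder_le

theorem norm_pow_succ_mul_harmonicRemainder_le {τ : ℂ} (hτ : ‖τ‖ ≤ 1) (k : ℕ) :
    ‖τ ^ (k + 1) * (harmonicRemainder k : ℂ)‖ ≤ harmonicRemainder k := by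
  rw [norm_mul, norm_pow, Complex.norm_real, norm_of_nonneg (harmonicRemainder_nonneg k)]
  exact mul_le_of_le_one_left (harmonicRemainder_nonneg k) (pow_le_one₀ (norm_nonneg τ) hτ)

theorem norm_tsum_pow_succ_mul_harmonicRemainder_le {τ : ℂ} (hτ : ‖τ‖ ≤ 1) :
    ‖∑' k, τ ^ (k + 1) * (harmonicRemainder k : ℂ)‖ ≤ 1 / 2 :=
  (tsum_of_norm_bounded summable_harmonicRemainder.hasSum
    (norm_pow_succ_mul_harmonicRemainder_le hτ)).trans
    (tsum_le_of_sum_range_le harmonicRemainder_nonneg sum_range_harmonicRemainder_le)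

theorem tsum_pow_succ_mul_log_succ {τ : ℂ} (hτ : ‖τ‖ < 1) :
    ∑' n : ℕ, τ ^ (n + 1) * (log ((n : ℝ) + 1) : ℂ)
      = -Complex.log (1 - τ) / (1 - τ) - eulerMascheroniConstant * (τ / (1 - τ))
        + Complex.log (1 - τ) / 2 + ∑' k, τ ^ (k + 1) * (harmonicRemainder k : ℂ) := by
  have hγ := ((hasSum_geometric_of_norm_lt_one hτ).mul_left τ).mul_left
    (eulerMascheroniConstant : ℂ)
  have hR := (summable_harmonicRemainder.of_norm_bounded
    (norm_pow_succ_mul_harmonicRemainder_le hτ.le)).hasSum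
  have h := (((Complex.hasSum_pow_succ_mul_harmonic_succ hτ).sub hγ).sub
    ((Complex.hasSum_taylorSeries_neg_log' hτ).div_const 2)).add hR
  rw [(h.congr_fun fun n => ?_).tsum_eq]
  · ring
  · have := Nat.cast_add_one_ne_zero (R := ℂ) n
    simp only [harmonicRemainder]
    push_cast
    field_simp
    ring

/-- Uniformly for `|τ| < 1`:
`Σ_{n≥1} τⁿ log n = (1/(1-τ))log(1/(1-τ)) - γ/(1-τ) - (1/2)log(1/(1-τ)) + O(1)`,
where `γ` is the Euler–Mascheroni constant and `log` the principal branch. -/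
theorem log_series_asymptotics :
    ∃ C : ℝ, 0 < C ∧ ∀ τ : ℂ, ‖τ‖ < 1 →
      ‖(∑' n : ℕ, τ ^ (n + 1) * (Real.log ((n : ℝ) + 1) : ℂ)) -
          ((1 / (1 - τ)) * Complex.log (1 / (1 - τ))
            - (Real.eulerMascheroniConstant : ℂ) / (1 - τ)
            - (1 / 2) * Complex.log (1 / (1 - τ)))‖ ≤ C := by
  have hγ := one_half_lt_eulerMascheroniConstant
  refine ⟨eulerMascheroniConstant + 1 / 2, by linarith, fun τ hτ => ?_⟩
  have hne : 1 - τ ≠ 0 := sub_ne_zero.2 fun h => by simp [← h] at hτ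
  rw [tsum_pow_succ_mul_log_succ hτ, Complex.log_one_div_one_sub hτ]
  calc _ = ‖(eulerMascheroniConstant : ℂ) + ∑' k, τ ^ (k + 1) * (harmonicRemainder k : ℂ)‖ := by
        congr 1
        field_simp
        ring
    _ ≤ eulerMascheroniConstant + 1 / 2 := by
        refine (norm_add_le _ _).trans
          (add_le_add ?_ (norm_tsum_pow_succ_mul_harmonicRemainder_le hτ.le))
        rw [Complex.norm_real, norm_of_nonneg (by linarith)]
end
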